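/- arXiv:2512.09135 — 2 statements merged into one kernel-verified Lean document; each statement's English description precedes it below -/
import Mathlib

section
/- There exists a (unique) group homomorphism φ : H → H satisfying φ(a) = a², φ(b) = b, and φ(s) = s⁻¹bs², where a, b, s denote the images of the generators in H. -/
/-- Generators `a`, `b`, `s` of the presented group `H`. -/
inductive Gen3 : Type
  | a | b | s

open FreeGroup in
/-- The relators `b⁻¹ * a * b * a⁻¹` and `s⁻¹ * a² * s * a⁻⁴`. -/
def relsH : Set (FreeGroup Gen3) :=
  {(of Gen3.b)⁻¹ * of Gen3.a * of Gen3.b * (of Gen3.a)⁻¹,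
   (of Gen3.s)⁻¹ * (of Gen3.a) ^ 2 * of Gen3.s * ((of Gen3.a) ^ 4)⁻¹}

/-- The group `H = ⟨a, b, s ∣ b⁻¹ab = a, s⁻¹a²s = a⁴⟩`. -/
abbrev H : Type := PresentedGroup relsH

/-- The images of the generators `a`, `b`, `s` in `H`. -/
def ha : H := PresentedGroup.of Gen3.a
def hb : H := PresentedGroup.of Gen3.b
def hs : H := PresentedGroup.of Gen3.s

lemma rel_eq_one {r : FreeGroup Gen3} (hr : r ∈ relsH) : PresentedGroup.mk relsH r = 1 :=
  (QuotientGroup.eq_one_iff r).mpr (Subgroup.subset_normalClosure hr)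

lemma rel1 : hb⁻¹ * ha * hb * ha⁻¹ = 1 := by
  have := rel_eq_one (r := (FreeGroup.of Gen3.b)⁻¹ * FreeGroup.of Gen3.a * FreeGroup.of Gen3.b
    * (FreeGroup.of Gen3.a)⁻¹) (Or.inl rfl)
  simpa [ha, hb, PresentedGroup.of] using this

lemma rel2 : hs⁻¹ * ha ^ 2 * hs * (ha ^ 4)⁻¹ = 1 := by
  have := rel_eq_one (r := (FreeGroup.of Gen3.s)⁻¹ * (FreeGroup.of Gen3.a) ^ 2
    * FreeGroup.of Gen3.s * ((FreeGroup.of Gen3.a) ^ 4)⁻¹) (Or.inr rfl)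
  simpa [ha, hs, PresentedGroup.of] using this

lemma comm_ab : Commute ha hb := by
  have h := rel1
  rw [mul_inv_eq_one] at h
  calc ha * hb = hb * (hb⁻¹ * ha * hb) := by group
    _ = hb * ha := by rw [h]

lemma conj_b_pow (n : ℕ) : hb⁻¹ * ha ^ n * hb = ha ^ n := by
  have c := (comm_ab.pow_left n).eq
  rw [mul_assoc, c]
  group

lemma conj_s : hs⁻¹ * ha ^ 2 * hs = ha ^ 4 := by
  have h := rel2
  rwa [mul_inv_eq_one] at h

lemma hsa2 : hs * ha ^ 4 = ha ^ 2 * hs := by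
  calc hs * ha ^ 4 = hs * (hs⁻¹ * ha ^ 2 * hs) := by rw [conj_s]
    _ = ha ^ 2 * hs := by group

def fgen : Gen3 → H
  | Gen3.a => ha ^ 2
  | Gen3.b => hb
  | Gen3.s => hs⁻¹ * hb * hs ^ 2

lemma hrels : ∀ r ∈ relsH, FreeGroup.lift fgen r = 1 := by
  intro r hr
  rcases hr with h | h <;> subst h <;> simp [fgen]
  · rw [conj_b_pow 2]
    group
  · calc (hs ^ 2)⁻¹ * (hb⁻¹ * hs) * (ha ^ 2) ^ 2 * (hs⁻¹ * hb * hs ^ 2) * ((ha ^ 2) ^ 4)⁻¹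
        = (hs ^ 2)⁻¹ * hb⁻¹ * (hs * ha ^ 4) * (hs⁻¹ * hb) * hs ^ 2 * (ha ^ 8)⁻¹ := by group
      _ = (hs ^ 2)⁻¹ * hb⁻¹ * (ha ^ 2 * hs) * (hs⁻¹ * hb) * hs ^ 2 * (ha ^ 8)⁻¹ := by rw [hsa2]
      _ = (hs ^ 2)⁻¹ * (hb⁻¹ * ha ^ 2 * hb) * hs ^ 2 * (ha ^ 8)⁻¹ := by group
      _ = (hs ^ 2)⁻¹ * ha ^ 2 * hs ^ 2 * (ha ^ 8)⁻¹ := by rw [conj_b_pow 2]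
      _ = hs⁻¹ * (hs⁻¹ * ha ^ 2 * hs) * hs * (ha ^ 8)⁻¹ := by rw [pow_two hs]; group
      _ = hs⁻¹ * ha ^ 4 * hs * (ha ^ 8)⁻¹ := by rw [conj_s]
      _ = (hs⁻¹ * ha ^ 2 * hs) * (hs⁻¹ * ha ^ 2 * hs) * (ha ^ 8)⁻¹ := by group
      _ = ha ^ 4 * ha ^ 4 * (ha ^ 8)⁻¹ := by rw [conj_s]
      _ = 1 := by group

/-- There is a unique endomorphism `φ` of `H` with `φ(a) = a²`, `φ(b) = b`,
`φ(s) = s⁻¹bs²`. -/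
theorem exists_unique_phi :
    ∃! φ : H →* H, φ ha = ha ^ 2 ∧ φ hb = hb ∧ φ hs = hs⁻¹ * hb * hs ^ 2 := by
  refine ⟨PresentedGroup.toGroup hrels, ⟨?_, ?_, ?_⟩, ?_⟩
  · exact PresentedGroup.toGroup.of hrels
  · exact PresentedGroup.toGroup.of hrels
  · exact PresentedGroup.toGroup.of hrels
  · rintro ψ ⟨h1, h2, h3⟩
    refine PresentedGroup.ext fun x => ?_
    cases x <;>
      simp only [PresentedGroup.toGroup.of, fgen] <;>
      [exact h1; exact h2; exact h3]
end

section
/- The group homomorphism ψ : H → H determined by ψ(a) = a², ψ(b) = b, ψ(s) = s is not surjective; in particular the generator a does not lie in the range of ψ. -/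
/-- Map generators to `Multiplicative (ZMod 2)`: `a ↦ 1`, `b, s ↦ 0`. -/
def fGen : Gen3 → Multiplicative (ZMod 2)
  | Gen3.a => Multiplicative.ofAdd 1
  | Gen3.b => 1
  | Gen3.s => 1

lemma fGen_rels : ∀ r ∈ relsH, FreeGroup.lift fGen r = 1 := by
  intro r hr
  rcases hr with h | h <;> subst h <;> simp [fGen] <;> decide

/-- The homomorphism `H → ZMod 2` sending `a ↦ 1`, `b,s ↦ 0`. -/
def φ : H →* Multiplicative (ZMod 2) := PresentedGroup.toGroup fGen_rels

lemma φ_a : φ ha = Multiplicative.ofAdd 1 := PresentedGroup.toGroup.of fGen_rels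

/-- The endomorphism `ψ` of `H` determined by `ψ(a) = a²`, `ψ(b) = b`, `ψ(s) = s` is
not surjective; in particular `a` is not in the range of `ψ`. -/
theorem psi_not_surjective (ψ : H →* H)
    (hψa : ψ ha = ha ^ 2) (hψb : ψ hb = hb) (hψs : ψ hs = hs) :
    ¬ Function.Surjective ψ ∧ ha ∉ ψ.range := by
  have key : φ.comp ψ = 1 := by
    apply PresentedGroup.ext
    intro x
    cases x
    · show φ (ψ ha) = 1
      rw [hψa, map_pow, φ_a]; decide
    · show φ (ψ hb) = 1
      rw [hψb]; exact PresentedGroup.toGroup.of fGen_rels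
    · show φ (ψ hs) = 1
      rw [hψs]; exact PresentedGroup.toGroup.of fGen_rels
  have hnot : ha ∉ ψ.range := by
    rintro ⟨x, hx⟩
    have : φ (ψ x) = 1 := DFunLike.congr_fun key x
    rw [hx, φ_a] at this
    exact absurd this (by decide)
  exact ⟨fun hsurj => hnot ((MonoidHom.range_eq_top.mpr hsurj) ▸ Subgroup.mem_top ha), hnot⟩
end
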